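/- arXiv:1701.00982 — 4 statements merged into one kernel-verified Lean document; each statement's English description precedes it below -/
import Mathlib

section
/- Fix s ∈ ℝ. Then the upper incomplete gamma function satisfies Γ(s, x) / (x^{s−1} e^{−x}) → 1 as x → ∞, where Γ(s, x) = ∫_x^∞ t^{s−1} e^{−t} dt. -/
/-!
L'Hôpital's rule at `+∞`: numerator and denominator both tend to `0`, the numerator has derivative
`-x^{s-1} e^{-x}` and the denominator `-x^{s-1} e^{-x} (1 - (s-1)/x)`, so the ratio of
derivatives is `(1 - (s-1)/x)⁻¹ → 1`.
-/

open MeasureTheory Real Filter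

open Set Topology

theorem integrableOn_rpow_mul_exp_neg_Ioi (s : ℝ) {a : ℝ} (ha : 0 < a) :
    IntegrableOn (fun t : ℝ => t ^ s * exp (-t)) (Ioi a) :=
  integrable_of_isBigO_exp_neg one_half_pos
    ((continuousOn_id.rpow_const fun t ht => Or.inl (ha.trans_le ht).ne').mul
      continuousOn_id.neg.rexp)
    (by simpa only [mul_comm] using (Gamma_integrand_isLittleO s).isBigO)

theorem hasDerivAt_integral_Ioi {E : Type*} [NormedAddCommGroup E] [NormedSpace ℝ E]
    [CompleteSpace E] {f : ℝ → E} {a x : ℝ} (hf : IntegrableOn f (Ioi a)) (hax : a < x)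
    (hcont : ContinuousAt f x) :
    HasDerivAt (fun y => ∫ t in Ioi y, f t) (-f x) x := by
  have hinterval : HasDerivAt (fun y => ∫ t in a..y, f t) (f x) x :=
    intervalIntegral.integral_hasDerivAt_right
      ((intervalIntegrable_iff_integrableOn_Ioc_of_le hax.le).2
        (hf.mono_set Ioc_subset_Ioi_self))
      ⟨Ioi a, Ioi_mem_nhds hax, hf.aestronglyMeasurable⟩ hcont
  refine (hinterval.const_sub (∫ t in Ioi a, f t)).congr_of_eventuallyEq ?_
  filter_upwards [Ioi_mem_nhds hax] with y hy
  rw [← intervalIntegral.integral_Ioi_sub_Ioi hf (le_of_lt hy), sub_sub_cancel]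

theorem hasDerivAt_rpow_mul_exp_neg (s : ℝ) {x : ℝ} (hx : 0 < x) :
    HasDerivAt (fun y : ℝ => y ^ s * exp (-y)) (-(x ^ s * exp (-x)) * (1 - s / x)) x := by
  refine ((hasDerivAt_rpow_const (p := s) (Or.inl hx.ne')).mul
    (hasDerivAt_neg x).exp).congr_deriv ?_
  rw [rpow_sub_one hx.ne']
  field_simp
  ring

theorem tendsto_one_sub_div_inv_atTop (s : ℝ) :
    Tendsto (fun x : ℝ => (1 - s / x)⁻¹) atTop (𝓝 1) := by
  simpa using (tendsto_const_nhds.sub (tendsto_const_nhds.div_atTop tendsto_id)).inv₀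
    (by norm_num : (1 : ℝ) - 0 ≠ 0)

/-- For fixed real `s`, the upper incomplete gamma function satisfies
`Γ(s, x) / (x^{s-1} e^{-x}) → 1` as `x → ∞`. -/
theorem upper_incomplete_gamma_asymptotic (s : ℝ) :
    Tendsto (fun x : ℝ =>
        (∫ t in Set.Ioi x, t ^ (s - 1) * exp (-t)) / (x ^ (s - 1) * exp (-x)))
      atTop (nhds 1) := by
  have hint := integrableOn_rpow_mul_exp_neg_Ioi (s - 1) one_pos
  refine HasDerivAt.lhopital_zero_atTop (f' := fun x => -(x ^ (s - 1) * exp (-x)))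
    (g' := fun x => -(x ^ (s - 1) * exp (-x)) * (1 - (s - 1) / x)) ?_ ?_ ?_
    (tendsto_integral_Ioi_zero tendsto_id)
    (by simpa using tendsto_rpow_mul_exp_neg_mul_atTop_nhds_zero (s - 1) 1 one_pos)
    ((tendsto_one_sub_div_inv_atTop (s - 1)).congr' ?_)
  · filter_upwards [eventually_gt_atTop 1] with x hx
    exact hasDerivAt_integral_Ioi hint hx
      ((continuousAt_id.rpow_const (Or.inl (one_pos.trans hx).ne')).mul continuousAt_id.neg.rexp)
  · filter_upwards [eventually_gt_atTop 0] with x hx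
    exact hasDerivAt_rpow_mul_exp_neg (s - 1) hx
  · filter_upwards [eventually_gt_atTop 0, eventually_gt_atTop (s - 1)] with x hx hxs
    have hlt : (s - 1) / x < 1 := (div_lt_one hx).2 hxs
    exact mul_ne_zero (neg_ne_zero.2 (by positivity)) (by linarith)
  · filter_upwards [eventually_gt_atTop 0] with x hx
    exact (div_mul_cancel_left₀ (neg_ne_zero.2 (by positivity)) _).symm
end

section
/- Let α > 0, β > 0, d > 0, ρ > 0 and set c₁ = 2/α, a = β d^α, b₁ = c₁ π ρ Γ(2/α). Define, for each positive integer K, P(K) = b₁ c₁ ∫₀^∞ (1 − e^{−a x})^K e^{−b₁ x^{−c₁}} x^{−1−c₁} dx. Then for every integer K ≥ 2, P(K) ≥ (1 − 1/K)^K · (1 − exp(−a^{c₁} b₁ / (ln K)^{c₁})). -/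
/-!
With `G x = exp (-(b₁ x^{-c₁}))`, the integrand of `P K` is `(1 - e^{-a x})^K` against the
density `G'` of the Fréchet distribution with CDF `G`. Past `x₀ = ln K / a` the first factor is
at least `(1 - 1/K)^K`, and the `G'`-mass of `(x₀, ∞)` is
`1 - G x₀ = 1 - exp (-(a^{c₁} b₁ / (ln K)^{c₁}))`; dropping `(0, x₀]` from the nonnegative
integral gives the bound.
-/

open MeasureTheory Real Filter Topology Set

theorem integrableOn_Ioi_deriv_of_nonneg_of_tendsto_nhdsGT {g g' : ℝ → ℝ} {a m l : ℝ}
    (hderiv : ∀ x ∈ Ioi a, HasDerivAt g (g' x) x) (g'pos : ∀ x ∈ Ioi a, 0 ≤ g' x)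
    (hga : Tendsto g (𝓝[>] a) (𝓝 m)) (hg : Tendsto g atTop (𝓝 l)) :
    IntegrableOn g' (Ioi a) := by
  classical
  -- `g a` may differ from the right limit `m`; redefining it there makes `g` right-continuous.
  refine integrableOn_Ioi_deriv_of_nonneg (g := Function.update g a m) (l := l) ?_
    (fun x hx => ?_) g'pos ?_
  · rwa [continuousWithinAt_update_same, Ici_sdiff_left]
  · refine (hderiv x hx).congr_of_eventuallyEq ?_
    filter_upwards [eventually_ne_nhds (ne_of_gt hx)] with y hy using Function.update_of_ne hy _ _
  · refine hg.congr' ?_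
    filter_upwards [eventually_ne_atTop a] with y hy using (Function.update_of_ne hy _ _).symm

theorem mul_setIntegral_le_setIntegral_mul {X : Type*} [MeasurableSpace X] {μ : Measure X}
    {f p : X → ℝ} {s t : Set X} {m : ℝ} (hts : t ⊆ s) (hs : MeasurableSet s)
    (ht : MeasurableSet t) (hp : IntegrableOn p s μ) (hp0 : ∀ x ∈ s, 0 ≤ p x)
    (hf : AEStronglyMeasurable f (μ.restrict s)) (hf0 : ∀ x ∈ s, 0 ≤ f x)
    (hf1 : ∀ x ∈ s, f x ≤ 1) (hm : ∀ x ∈ t, m ≤ f x) :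
    m * ∫ x in t, p x ∂μ ≤ ∫ x in s, f x * p x ∂μ := by
  have hfp : IntegrableOn (fun x => f x * p x) s μ :=
    hp.bdd_mul hf (c := 1) <| ae_restrict_of_forall_mem hs fun x hx => by
      rw [norm_of_nonneg (hf0 x hx)]; exact hf1 x hx
  calc m * ∫ x in t, p x ∂μ = ∫ x in t, m * p x ∂μ := (integral_const_mul m _).symm
    _ ≤ ∫ x in t, f x * p x ∂μ :=
      setIntegral_mono_on ((hp.mono_set hts).const_mul m) (hfp.mono_set hts) ht
        fun x hx => mul_le_mul_of_nonneg_right (hm x hx) (hp0 x (hts hx))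
    _ ≤ ∫ x in s, f x * p x ∂μ :=
      setIntegral_mono_set hfp
        (ae_restrict_of_forall_mem hs fun x hx => mul_nonneg (hf0 x hx) (hp0 x hx))
        hts.eventuallyLE

section Frechet

variable {b c x : ℝ}

noncomputable def frechetCDF (b c x : ℝ) : ℝ := exp (-(b * x ^ (-c)))

noncomputable def frechetPDF (b c x : ℝ) : ℝ := b * c * (exp (-(b * x ^ (-c))) * x ^ (-1 - c))

theorem hasDerivAt_frechetCDF (hx : 0 < x) :
    HasDerivAt (frechetCDF b c) (frechetPDF b c x) x := by
  have h : HasDerivAt (fun y => -(b * y ^ (-c))) (-(b * (-c * x ^ (-c - 1)))) x :=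
    ((hasDerivAt_rpow_const (Or.inl hx.ne')).const_mul b).neg
  exact h.exp.congr_deriv (by rw [frechetPDF, show -c - 1 = -1 - c by ring]; ring)

theorem frechetPDF_nonneg (hb : 0 ≤ b) (hc : 0 ≤ c) (hx : 0 ≤ x) : 0 ≤ frechetPDF b c x :=
  mul_nonneg (mul_nonneg hb hc) (mul_nonneg (exp_pos _).le (rpow_nonneg hx _))

theorem tendsto_frechetCDF_atTop (hc : 0 < c) : Tendsto (frechetCDF b c) atTop (𝓝 1) := by
  have h := ((tendsto_rpow_neg_atTop hc).const_mul b).neg.rexp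
  rwa [mul_zero, neg_zero, exp_zero] at h

theorem tendsto_frechetCDF_nhdsGT_zero (hb : 0 < b) (hc : 0 < c) :
    Tendsto (frechetCDF b c) (𝓝[>] 0) (𝓝 0) :=
  tendsto_exp_atBot.comp <| tendsto_neg_atTop_atBot.comp <|
    (tendsto_rpow_neg_nhdsGT_zero (neg_neg_of_pos hc)).const_mul_atTop hb

theorem integrableOn_frechetPDF (hb : 0 < b) (hc : 0 < c) :
    IntegrableOn (frechetPDF b c) (Ioi 0) :=
  integrableOn_Ioi_deriv_of_nonneg_of_tendsto_nhdsGT (fun _ hx => hasDerivAt_frechetCDF hx)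
    (fun _ hx => frechetPDF_nonneg hb.le hc.le (le_of_lt hx))
    (tendsto_frechetCDF_nhdsGT_zero hb hc) (tendsto_frechetCDF_atTop hc)

theorem integral_Ioi_frechetPDF (hb : 0 ≤ b) (hc : 0 < c) (hx : 0 < x) :
    ∫ y in Ioi x, frechetPDF b c y = 1 - frechetCDF b c x :=
  integral_Ioi_of_hasDerivAt_of_nonneg' (fun _ hy => hasDerivAt_frechetCDF (hx.trans_le hy))
    (fun _ hy => frechetPDF_nonneg hb hc.le (hx.trans hy).le) (tendsto_frechetCDF_atTop hc)

theorem frechetCDF_div {a y : ℝ} (ha : 0 < a) (hy : 0 < y) :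
    frechetCDF b c (y / a) = exp (-(a ^ c * b / y ^ c)) := by
  rw [frechetCDF, div_rpow hy.le ha.le, rpow_neg hy.le, rpow_neg ha.le]
  field_simp

end Frechet

theorem one_sub_exp_neg_mem_Icc {y : ℝ} (hy : 0 ≤ y) : 1 - exp (-y) ∈ Icc 0 1 :=
  ⟨sub_nonneg.2 (exp_le_one_iff.2 (neg_nonpos.2 hy)), sub_le_self _ (exp_pos _).le⟩

theorem one_sub_inv_pow_le_one_sub_exp_neg_pow {a x : ℝ} {K : ℕ} (ha : 0 < a) (hK : 0 < K)
    (hx : log K / a < x) : (1 - 1 / (K : ℝ)) ^ K ≤ (1 - exp (-(a * x))) ^ K := by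
  have hK' : (0 : ℝ) < K := Nat.cast_pos.2 hK
  have hexp : exp (-(a * x)) ≤ 1 / K := by
    rw [one_div, ← exp_log hK', ← exp_neg]
    exact exp_le_exp.2 (neg_le_neg ((div_lt_iff₀' ha).1 hx).le)
  have hK1 : 1 / (K : ℝ) ≤ 1 := div_le_one_of_le₀ (Nat.one_le_cast.2 hK) hK'.le
  exact pow_le_pow_left₀ (sub_nonneg.2 hK1) (sub_le_sub_left hexp 1) K

/-- Lower bound for the half-duplex secrecy outage probability with
`K ≥ 2` antennas:
`P(K) ≥ (1 - 1/K)^K (1 - exp (-a^{c₁} b₁ / (ln K)^{c₁}))`. -/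
theorem hd_secrecy_outage_lower_bound
    (α β d ρ : ℝ) (hα : 0 < α) (hβ : 0 < β) (hd : 0 < d) (hρ : 0 < ρ)
    (c₁ a b₁ : ℝ)
    (hc₁ : c₁ = 2 / α) (ha : a = β * d ^ α)
    (hb₁ : b₁ = c₁ * Real.pi * ρ * Real.Gamma (2 / α))
    (P : ℕ → ℝ)
    (hP : ∀ K : ℕ, P K =
      b₁ * c₁ * ∫ x in Set.Ioi (0:ℝ),
        (1 - exp (-(a * x))) ^ K * exp (-(b₁ * x ^ (-c₁))) * x ^ (-1 - c₁))
    (K : ℕ) (hK : 2 ≤ K) :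
    (1 - 1 / (K : ℝ)) ^ K * (1 - exp (-(a ^ c₁ * b₁ / (Real.log K) ^ c₁))) ≤ P K := by
  have hc : 0 < c₁ := hc₁ ▸ div_pos two_pos hα
  have ha₀ : 0 < a := ha ▸ by positivity
  have hb : 0 < b₁ := hb₁ ▸ mul_pos (by positivity) (Gamma_pos_of_pos (by positivity))
  have hlog : 0 < log K := log_pos (by exact_mod_cast hK)
  have hx₀ : 0 < log K / a := div_pos hlog ha₀
  have hPK : P K = ∫ x in Ioi 0, (1 - exp (-(a * x))) ^ K * frechetPDF b₁ c₁ x := by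
    rw [hP, ← integral_const_mul]
    congr 1 with x
    rw [frechetPDF]
    ring
  have hF : ∀ x ∈ Ioi (0 : ℝ), 1 - exp (-(a * x)) ∈ Icc 0 1 :=
    fun x hx => one_sub_exp_neg_mem_Icc (mul_pos ha₀ hx).le
  rw [hPK, ← frechetCDF_div ha₀ hlog, ← integral_Ioi_frechetPDF hb.le hc hx₀]
  refine mul_setIntegral_le_setIntegral_mul (Ioi_subset_Ioi hx₀.le) measurableSet_Ioi
    measurableSet_Ioi (integrableOn_frechetPDF hb hc)
    (fun x hx => frechetPDF_nonneg hb.le hc.le (le_of_lt hx))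
    (by fun_prop : Continuous fun x => (1 - exp (-(a * x))) ^ K).aestronglyMeasurable
    (fun x hx => pow_nonneg (hF x hx).1 K) (fun x hx => pow_le_one₀ (hF x hx).1 (hF x hx).2)
    (fun x hx => one_sub_inv_pow_le_one_sub_exp_neg_pow ha₀ (by omega) hx)
end

section
/- Let K be a positive integer, μ > 0 and λ > 0. Let X₁ be the maximum of K independent Exp(μ) random variables and let X₂ be an Exp(1/λ) random variable (mean λ) independent of X₁. Then for every x ≥ 0, the probability that X₁/(X₂ + 1) ≤ x equals ∑_{k=0}^{K} C(K,k) (−1)^k e^{−kμx} / (1 + kμλx), where C(K,k) is the binomial coefficient. -/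
/-!
The maximum of `K` independent `Exp(μ)` variables has CDF `(1 - e^{-μc})^K` on `c ≥ 0`. Since it
is independent of `X₂`, conditioning on `X₂ = t` gives
`P(X₁/(X₂+1) ≤ x) = E[(1 - e^{-μx(X₂+1)})^K]`. Expanding the power binomially leaves the Laplace
transform `E[e^{-sX₂}] = 1/(1 + sλ)` of the exponential law, term by term.
-/

open MeasureTheory ProbabilityTheory Real Set

lemma Real.one_sub_exp_neg_nonneg {y : ℝ} (hy : 0 ≤ y) : 0 ≤ 1 - exp (-y) :=
  sub_nonneg.2 (exp_le_one_iff.2 (neg_nonpos.2 hy))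

namespace ProbabilityTheory

section Exponential

variable {r : ℝ}

lemma measurable_exponentialPDF (r : ℝ) : Measurable (exponentialPDF r) :=
  (measurable_exponentialPDFReal r).ennreal_ofReal

lemma expMeasure_Iic (hr : 0 < r) {c : ℝ} (hc : 0 ≤ c) :
    expMeasure r (Iic c) = ENNReal.ofReal (1 - exp (-(r * c))) := by
  have := isProbabilityMeasure_expMeasure hr
  rw [← ofReal_cdf, cdf_expMeasure_eq hr, if_pos hc]

lemma ae_nonneg_expMeasure (r : ℝ) : ∀ᵐ t ∂expMeasure r, 0 ≤ t := by
  rw [ae_iff]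
  simp only [not_le]
  exact (withDensity_apply _ measurableSet_Iio).trans (lintegral_exponentialPDF_of_nonpos le_rfl)

lemma integrable_exp_neg_mul_expMeasure (hr : 0 < r) {a : ℝ} (ha : 0 ≤ a) :
    Integrable (fun t ↦ exp (-(a * t))) (expMeasure r) := by
  have := isProbabilityMeasure_expMeasure hr
  refine (integrable_const 1).mono' (by fun_prop) ?_
  filter_upwards [ae_nonneg_expMeasure r] with t ht
  rw [norm_of_nonneg (exp_pos _).le, exp_le_one_iff, neg_nonpos]
  positivity

lemma exponentialPDF_mul_exp_neg_mul (hr : 0 < r) {a : ℝ} (ha : 0 ≤ a) (t : ℝ) :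
    exponentialPDF r t * ENNReal.ofReal (exp (-(a * t)))
      = ENNReal.ofReal (r / (r + a)) * exponentialPDF (r + a) t := by
  rcases le_or_gt 0 t with ht | ht
  · rw [exponentialPDF_of_nonneg ht, exponentialPDF_of_nonneg ht,
      ← ENNReal.ofReal_mul (by positivity), ← ENNReal.ofReal_mul (by positivity), mul_assoc,
      ← exp_add, ← mul_assoc, div_mul_cancel₀ _ (by positivity)]
    ring_nf
  · simp [exponentialPDF_of_neg ht]

lemma integral_exp_neg_mul_expMeasure (hr : 0 < r) {a : ℝ} (ha : 0 ≤ a) :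
    ∫ t, exp (-(a * t)) ∂expMeasure r = r / (r + a) := by
  rw [integral_eq_lintegral_of_nonneg_ae (.of_forall fun t ↦ (exp_pos _).le) (by fun_prop),
    show expMeasure r = volume.withDensity (exponentialPDF r) from rfl,
    lintegral_withDensity_eq_lintegral_mul _ (measurable_exponentialPDF r) (by fun_prop)]
  simp only [Pi.mul_apply, exponentialPDF_mul_exp_neg_mul hr ha]
  rw [lintegral_const_mul _ (measurable_exponentialPDF _),
    lintegral_exponentialPDF_eq_one (by positivity), mul_one, ENNReal.toReal_ofReal (by positivity)]

lemma integral_one_sub_exp_pow_expMeasure (hr : 0 < r) {a : ℝ} (ha : 0 ≤ a) (K : ℕ) :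
    ∫ t, (1 - exp (-(a * (t + 1)))) ^ K ∂expMeasure r
      = ∑ k ∈ Finset.range (K + 1),
          (K.choose k : ℝ) * (-1) ^ k * exp (-(k * a)) * (r / (r + k * a)) := by
  have hbinomial : ∀ t, (1 - exp (-(a * (t + 1)))) ^ K = ∑ k ∈ Finset.range (K + 1),
      (K.choose k : ℝ) * (-1) ^ k * exp (-(k * a)) * exp (-(k * a * t)) := by
    intro t
    rw [sub_eq_neg_add, add_pow]
    refine Finset.sum_congr rfl fun k _ ↦ ?_
    rw [one_pow, mul_one, neg_pow, ← exp_nat_mul,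
      show (k : ℝ) * -(a * (t + 1)) = -(k * a) + -(k * a * t) by ring, exp_add]
    ring
  simp_rw [hbinomial]
  rw [integral_finsetSum _ fun k _ ↦
    (integrable_exp_neg_mul_expMeasure hr (by positivity)).const_mul _]
  refine Finset.sum_congr rfl fun k _ ↦ ?_
  rw [integral_const_mul, integral_exp_neg_mul_expMeasure hr (by positivity)]

end Exponential

section Independence

variable {Ω : Type*} [MeasurableSpace Ω] {P : Measure Ω}

lemma iIndepFun.indepFun_finCons {β : Type*} [MeasurableSpace β] {n : ℕ} {X : Ω → β}
    {Y : Fin n → Ω → β} (h : iIndepFun (Fin.cons X Y : Fin (n + 1) → Ω → β) P)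
    (hX : Measurable X) (hY : ∀ i, Measurable (Y i)) :
    IndepFun X (fun ω i ↦ Y i ω) P := by
  have hmem : ∀ i : Fin n, i.succ ∈ ({0}ᶜ : Finset (Fin (n + 1))) := by simp [Fin.succ_ne_zero]
  exact (h.indepFun_finset {0} {0}ᶜ disjoint_compl_right (Fin.forall_fin_succ.2 ⟨hX, hY⟩)).comp
    (_mγ := ‹_›)
    (φ := fun v ↦ v ⟨0, Finset.mem_singleton_self 0⟩) (ψ := fun v i ↦ v ⟨i.succ, hmem i⟩)
    (measurable_pi_apply _) (measurable_pi_lambda _ fun i ↦ measurable_pi_apply _)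

lemma IndepFun.measure_preimage_eq_lintegral {α β : Type*} [MeasurableSpace α] [MeasurableSpace β]
    [IsFiniteMeasure P] {X : Ω → α} {Y : Ω → β} (h : IndepFun X Y P) (hX : Measurable X)
    (hY : Measurable Y) {s : Set (α × β)} (hs : MeasurableSet s) :
    P ((fun ω ↦ (X ω, Y ω)) ⁻¹' s) = ∫⁻ a, P.map Y (Prod.mk a ⁻¹' s) ∂P.map X := by
  rw [← Measure.map_apply (hX.prodMk hY) hs,
    (indepFun_iff_map_prod_eq_prod_map_map hX.aemeasurable hY.aemeasurable).1 h,
    Measure.prod_apply hs]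

-- For empty `ι`, `⨆ i, Y i ω` is the junk value `0`.
lemma iIndepFun.measure_iSup_le {ι : Type*} [Fintype ι] {Y : ι → Ω → ℝ} (h : iIndepFun Y P)
    {c : ℝ} (hc : 0 ≤ c) :
    P {ω | ⨆ i, Y i ω ≤ c} = ∏ i, P (Y i ⁻¹' Iic c) := by
  have hiSup : {ω | ⨆ i, Y i ω ≤ c} = ⋂ i, Y i ⁻¹' Iic c := by
    ext ω
    simp only [mem_ofPred_eq, mem_iInter, mem_preimage, mem_Iic]
    exact ⟨fun hle i ↦ (le_ciSup (Finite.bddAbove_range _) i).trans hle,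
      fun hle ↦ Real.iSup_le hle hc⟩
  exact hiSup ▸ h.meas_iInter fun i ↦ ⟨Iic c, measurableSet_Iic, rfl⟩

lemma iIndepFun.measure_iSup_le_of_expMeasure {ι : Type*} [Fintype ι] {Y : ι → Ω → ℝ}
    (h : iIndepFun Y P) (hY : ∀ i, Measurable (Y i)) {μ : ℝ} (hμ : 0 < μ)
    (hdist : ∀ i, P.map (Y i) = expMeasure μ) {c : ℝ} (hc : 0 ≤ c) :
    P {ω | ⨆ i, Y i ω ≤ c} = ENNReal.ofReal ((1 - exp (-(μ * c))) ^ Fintype.card ι) := by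
  rw [h.measure_iSup_le hc]
  simp_rw [← Measure.map_apply (hY _) measurableSet_Iic, hdist, expMeasure_Iic hμ hc,
    Finset.prod_const, Finset.card_univ]
  rw [ENNReal.ofReal_pow (one_sub_exp_neg_nonneg (by positivity))]

lemma iIndepFun.measure_iSup_div_add_one_le [IsFiniteMeasure P] {K : ℕ} {X : Ω → ℝ}
    {Y : Fin K → Ω → ℝ} (h : iIndepFun (Fin.cons X Y : Fin (K + 1) → Ω → ℝ) P)
    (hX : Measurable X) (hY : ∀ i, Measurable (Y i)) (hX_nonneg : ∀ᵐ t ∂P.map X, 0 ≤ t)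
    {μ : ℝ} (hμ : 0 < μ) (hdist : ∀ i, P.map (Y i) = expMeasure μ) {x : ℝ} (hx : 0 ≤ x) :
    P {ω | (⨆ i, Y i ω) / (X ω + 1) ≤ x}
      = ∫⁻ t, ENNReal.ofReal ((1 - exp (-(μ * x * (t + 1)))) ^ K) ∂P.map X := by
  set S := {p : ℝ × (Fin K → ℝ) | (⨆ i, p.2 i) / (p.1 + 1) ≤ x}
  have hS : MeasurableSet S :=
    measurableSet_le ((Measurable.iSup fun i ↦ (measurable_pi_apply i).comp measurable_snd).div
      (measurable_fst.add_const 1)) measurable_const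
  have hYvec : Measurable fun ω i ↦ Y i ω := measurable_pi_lambda _ hY
  have hYindep : iIndepFun Y P := h.precomp (g := Fin.succ) (Fin.succ_injective K)
  rw [show {ω | (⨆ i, Y i ω) / (X ω + 1) ≤ x} = (fun ω ↦ (X ω, fun i ↦ Y i ω)) ⁻¹' S from rfl,
    (h.indepFun_finCons hX hY).measure_preimage_eq_lintegral hX hYvec hS]
  refine lintegral_congr_ae (hX_nonneg.mono fun t ht ↦ ?_)
  have hslice : Prod.mk t ⁻¹' S = {v | ⨆ i, v i ≤ x * (t + 1)} := by
    ext v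
    exact div_le_iff₀ (by positivity : (0 : ℝ) < t + 1)
  dsimp only
  rw [Measure.map_apply hYvec (hS.preimage measurable_prodMk_left), hslice, mul_assoc]
  have := hYindep.measure_iSup_le_of_expMeasure hY hμ hdist (c := x * (t + 1)) (by positivity)
  rwa [Fintype.card_fin] at this

end Independence

end ProbabilityTheory

theorem fd_snr_cdf_general {Ω : Type*} [MeasurableSpace Ω] (P : Measure Ω)
    [IsProbabilityMeasure P]
    (K : ℕ) (μ lam : ℝ) (hμ : 0 < μ) (hlam : 0 < lam)
    (Y : Fin K → Ω → ℝ) (X₂ : Ω → ℝ)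
    (hYmeas : ∀ i, Measurable (Y i)) (hX₂meas : Measurable X₂)
    (hindep : iIndepFun (Fin.cons X₂ Y : Fin (K + 1) → Ω → ℝ) P)
    (hYdist : ∀ i, Measure.map (Y i) P = expMeasure μ)
    (hX₂dist : Measure.map X₂ P = expMeasure (1 / lam))
    (x : ℝ) (hx : 0 ≤ x) :
    (P {ω | (⨆ i, Y i ω) / (X₂ ω + 1) ≤ x}).toReal =
      ∑ k ∈ Finset.range (K + 1),
        (K.choose k : ℝ) * (-1 : ℝ) ^ k * exp (-(k * μ * x)) / (1 + k * μ * lam * x) := by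
  have hX₂_nonneg : ∀ᵐ t ∂expMeasure (1 / lam), 0 ≤ t := ae_nonneg_expMeasure _
  rw [hindep.measure_iSup_div_add_one_le hX₂meas hYmeas (hX₂dist ▸ hX₂_nonneg) hμ hYdist hx,
    hX₂dist, ← integral_eq_lintegral_of_nonneg_ae ?_ (by fun_prop),
    integral_one_sub_exp_pow_expMeasure (by positivity) (by positivity)]
  · refine Finset.sum_congr rfl fun k _ ↦ ?_
    field_simp
  · filter_upwards [hX₂_nonneg] with t ht
    exact pow_nonneg (one_sub_exp_neg_nonneg (by positivity)) K

/-- If `X₁` is the maximum of `K` independent `Exp(μ)` random variables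
and `X₂ ~ Exp(1/lam)` is independent of them, then for `x ≥ 0`,
`P(X₁/(X₂+1) ≤ x) = ∑ₖ C(K,k) (-1)^k e^{-kμx} / (1 + kμ·lam·x)`. -/
theorem fd_snr_cdf {Ω : Type*} [MeasurableSpace Ω] (P : Measure Ω)
    [IsProbabilityMeasure P]
    (K : ℕ) (hK : 0 < K) (μ lam : ℝ) (hμ : 0 < μ) (hlam : 0 < lam)
    (Y : Fin K → Ω → ℝ) (X₂ : Ω → ℝ)
    (hYmeas : ∀ i, Measurable (Y i)) (hX₂meas : Measurable X₂)
    (hindep : iIndepFun (Fin.cons X₂ Y : Fin (K + 1) → Ω → ℝ) P)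
    (hYdist : ∀ i, Measure.map (Y i) P = expMeasure μ)
    (hX₂dist : Measure.map X₂ P = expMeasure (1 / lam))
    (x : ℝ) (hx : 0 ≤ x) :
    (P {ω | (⨆ i, Y i ω) / (X₂ ω + 1) ≤ x}).toReal =
      ∑ k ∈ Finset.range (K + 1),
        (K.choose k : ℝ) * (-1 : ℝ) ^ k * exp (-(k * μ * x)) / (1 + k * μ * lam * x) :=
  fd_snr_cdf_general P K μ lam hμ hlam Y X₂ hYmeas hX₂meas hindep hYdist hX₂dist x hx
end

section
/- Define, for y > 0, α > 0 and δ > 0, Ψ(y; α, δ) = ∫₀^{2π} ∫₀^1 (y z^{α+1}) / (y z^α + (z² + δ² − 2zδ cos θ)^{α/2}) dz dθ. Then for all y > 0 and δ > 0 with δ ≠ 1, Ψ(y; 2, δ) = (π y/(y+1)³) · [ (y+1)(ψ(y,δ) − δ²) + δ²(y−1) ln( 2δ²y / ( δ²(y−1) + (y+1)(ψ(y,δ) + y + 1) ) ) ], where ψ(y, δ) = √(δ⁴ + 2δ²(y−1) + (y+1)²). -/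
/-! For `α = 2` the integrand is rational in `z` and `cos θ`. Integrating first in `θ` with
`∫₀^{2π} dθ / (A - B cos θ) = 2π / √(A² - B²)` leaves `2πy ∫₀¹ z³ / √(a z⁴ + b z² + c) dz` with
`a = (y + 1)²`, `b = 2δ²(y - 1)`, `c = δ⁴`, which has an elementary primitive; at `z = 1` the
square root is `ψ(y, δ)`. -/

open MeasureTheory Real

theorem intervalIntegral_integral_swap_of_continuous {E : Type*} [NormedAddCommGroup E]
    [NormedSpace ℝ E] {f : ℝ → ℝ → E} (hf : Continuous (Function.uncurry f))
    {a b c d : ℝ} (hab : a ≤ b) (hcd : c ≤ d) :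
    ∫ x in a..b, ∫ y in c..d, f x y = ∫ y in c..d, ∫ x in a..b, f x y := by
  simp only [intervalIntegral.integral_of_le hab, intervalIntegral.integral_of_le hcd]
  refine integral_integral_swap ?_
  rw [Measure.prod_restrict, ← Measure.volume_eq_prod]
  exact (hf.continuousOn.integrableOn_compact (isCompact_Icc.prod isCompact_Icc)).mono_set
    (Set.prod_mono Set.Ioc_subset_Icc_self Set.Ioc_subset_Icc_self)

theorem add_add_sub_mul_cos_pos {a b : ℝ} (ha : 0 < a) (hb : 0 < b) (t : ℝ) :
    0 < a + b + (a - b) * cos t := by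
  have h₁ : 0 ≤ 1 + cos t := by linarith [neg_one_le_cos t]
  have h₂ : 0 ≤ 1 - cos t := by linarith [cos_le_one t]
  nlinarith [mul_nonneg ha.le h₁, mul_nonneg hb.le h₂]

theorem sub_mul_cos_pos {A B : ℝ} (h : |B| < A) (t : ℝ) : 0 < A - B * cos t := by
  obtain ⟨hB₁, hB₂⟩ := abs_lt.1 h
  have := add_add_sub_mul_cos_pos (a := (A - B) / 2) (b := (A + B) / 2)
    (by linarith) (by linarith) t
  linarith

/-- A primitive of `t ↦ 2l / (1 + l² + (1 - l²) cos t)` that is continuous on all of `ℝ`, unlike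
the textbook one `2 arctan (l tan (t / 2))`. -/
theorem hasDerivAt_add_two_mul_arctan {l : ℝ} (hl : 0 < l) (t : ℝ) :
    HasDerivAt (fun t => t + 2 * arctan ((l - 1) * sin t / (1 + l + (1 - l) * cos t)))
      (2 * l / (1 + l ^ 2 + (1 - l ^ 2) * cos t)) t := by
  have hD := add_add_sub_mul_cos_pos one_pos hl t
  have hE := add_add_sub_mul_cos_pos one_pos (pow_pos hl 2) t
  have hu := ((hasDerivAt_sin t).const_mul (l - 1)).div
    (((hasDerivAt_cos t).const_mul (1 - l)).const_add (1 + l)) hD.ne'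
  refine ((hasDerivAt_id t).add ((hasDerivAt_arctan _).comp t hu |>.const_mul 2)).congr_deriv ?_
  have hsc := sin_sq_add_cos_sq t
  have h1u : 1 + ((l - 1) * sin t / (1 + l + (1 - l) * cos t)) ^ 2
      = 2 * (1 + l ^ 2 + (1 - l ^ 2) * cos t) / (1 + l + (1 - l) * cos t) ^ 2 := by
    field_simp
    linear_combination (l - 1) ^ 2 * hsc
  have hnum : (l - 1) * cos t * (1 + l + (1 - l) * cos t) - (l - 1) * sin t * ((1 - l) * -sin t)
      = (l - 1) * ((1 + l) * cos t + (1 - l)) := by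
    linear_combination (l - 1) * (1 - l) * hsc
  simp only [Pi.div_apply, h1u, hnum]
  generalize 1 + l + (1 - l) * cos t = D at hD ⊢
  field_simp
  ring

theorem integral_two_mul_div_one_add_sq_add_one_sub_sq_mul_cos {l : ℝ} (hl : 0 < l) :
    ∫ t in (0:ℝ)..2 * π, 2 * l / (1 + l ^ 2 + (1 - l ^ 2) * cos t) = 2 * π := by
  have hcont : Continuous fun t => 2 * l / (1 + l ^ 2 + (1 - l ^ 2) * cos t) :=
    continuous_const.div (by fun_prop) fun t =>
      (add_add_sub_mul_cos_pos one_pos (pow_pos hl 2) t).ne'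
  rw [intervalIntegral.integral_eq_sub_of_hasDerivAt (fun t _ => hasDerivAt_add_two_mul_arctan hl t)
    (hcont.intervalIntegrable _ _)]
  simp

theorem integral_inv_sub_mul_cos {A B : ℝ} (h : |B| < A) :
    ∫ t in (0:ℝ)..2 * π, (A - B * cos t)⁻¹ = 2 * π / √(A ^ 2 - B ^ 2) := by
  obtain ⟨hB₁, hB₂⟩ := abs_lt.1 h
  have hAB : 0 < A - B := by linarith
  set l := √((A + B) / (A - B))
  have hl : 0 < l := sqrt_pos.2 (div_pos (by linarith) hAB)
  have hl2 : l ^ 2 * (A - B) = A + B := by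
    rw [sq_sqrt (div_pos (by linarith) hAB).le, div_mul_cancel₀ _ hAB.ne']
  have hsqrt : √(A ^ 2 - B ^ 2) = l * (A - B) := by
    rw [← sqrt_sq (by positivity : 0 ≤ l * (A - B))]
    congr 1
    linear_combination -(A - B) * hl2
  have hintegrand : ∀ t, (A - B * cos t)⁻¹ =
      2 * l / (1 + l ^ 2 + (1 - l ^ 2) * cos t) / √(A ^ 2 - B ^ 2) := by
    intro t
    have hE : (1 + l ^ 2 + (1 - l ^ 2) * cos t) * (A - B) = 2 * (A - B * cos t) := by
      linear_combination (1 - cos t) * hl2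
    have := (sub_mul_cos_pos h t).ne'
    rw [hsqrt, div_div, mul_left_comm, hE]
    field_simp
  simp only [hintegrand, intervalIntegral.integral_div,
    integral_two_mul_div_one_add_sq_add_one_sub_sq_mul_cos hl]

section Quartic

variable {a b c : ℝ}

theorem quartic_pos (ha : 0 < a) (hd : b ^ 2 < 4 * a * c) (z : ℝ) :
    0 < a * z ^ 4 + b * z ^ 2 + c := by
  nlinarith [sq_nonneg (2 * a * z ^ 2 + b)]

theorem two_mul_sqrt_mul_sqrt_quartic_add_pos (ha : 0 < a) (hd : b ^ 2 < 4 * a * c) (z : ℝ) :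
    0 < 2 * √a * √(a * z ^ 4 + b * z ^ 2 + c) + 2 * a * z ^ 2 + b := by
  have hQ := quartic_pos ha hd z
  have hprod : (2 * √a * √(a * z ^ 4 + b * z ^ 2 + c)) ^ 2 =
      4 * a * (a * z ^ 4 + b * z ^ 2 + c) := by
    rw [mul_pow, mul_pow, sq_sqrt ha.le, sq_sqrt hQ.le]; ring
  have hsq : (2 * a * z ^ 2 + b) ^ 2 < (2 * √a * √(a * z ^ 4 + b * z ^ 2 + c)) ^ 2 := by
    rw [hprod]; linear_combination hd
  have := abs_lt_of_sq_lt_sq hsq (by positivity)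
  linarith [(abs_lt.1 this).1]

theorem hasDerivAt_sqrt_quartic_sub_log (ha : 0 < a) (hd : b ^ 2 < 4 * a * c) (z : ℝ) :
    HasDerivAt (fun z => √(a * z ^ 4 + b * z ^ 2 + c) / (2 * a)
        - b / (4 * a * √a) * log (2 * √a * √(a * z ^ 4 + b * z ^ 2 + c) + 2 * a * z ^ 2 + b))
      (z ^ 3 / √(a * z ^ 4 + b * z ^ 2 + c)) z := by
  have hQ := quartic_pos ha hd z
  have hL := two_mul_sqrt_mul_sqrt_quartic_add_pos ha hd z
  have hQd : HasDerivAt (fun z => a * z ^ 4 + b * z ^ 2 + c) (4 * a * z ^ 3 + 2 * b * z) z := by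
    refine (((hasDerivAt_pow 4 z).const_mul a).add ((hasDerivAt_pow 2 z).const_mul b)).add_const c
      |>.congr_deriv ?_
    norm_num
    ring
  have hSd := (hasDerivAt_sqrt hQ.ne').comp z hQd
  have hLd := ((hSd.const_mul (2 * √a)).add ((hasDerivAt_pow 2 z).const_mul (2 * a))).add_const b
  refine ((hSd.div_const (2 * a)).sub
    (((hasDerivAt_log hL.ne').comp z hLd).const_mul _)).congr_deriv ?_
  have hr := sqrt_pos.2 ha
  have hr2 := sq_sqrt ha.le
  have hS := sqrt_pos.2 hQ
  generalize √(a * z ^ 4 + b * z ^ 2 + c) = S at hS hL ⊢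
  generalize √a = r at hr hr2 hL ⊢
  subst hr2
  have hLd_eq :
      2 * r * (1 / (2 * S) * (4 * r ^ 2 * z ^ 3 + 2 * b * z)) + 2 * r ^ 2 * (2 * z ^ (2 - 1))
        = 2 * z * r * (2 * r * S + 2 * r ^ 2 * z ^ 2 + b) / S := by
    field_simp
    ring
  simp only [Nat.cast_ofNat, hLd_eq]
  generalize 2 * r * S + 2 * r ^ 2 * z ^ 2 + b = L at hL ⊢
  field_simp
  ring

theorem integral_pow_three_div_sqrt_quartic (ha : 0 < a) (hd : b ^ 2 < 4 * a * c) :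
    ∫ z in (0:ℝ)..1, z ^ 3 / √(a * z ^ 4 + b * z ^ 2 + c) =
      (√(a + b + c) - √c) / (2 * a)
        - b / (4 * a * √a) * log ((2 * √a * √(a + b + c) + 2 * a + b) / (2 * √a * √c + b)) := by
  have hcont : Continuous fun z : ℝ => z ^ 3 / √(a * z ^ 4 + b * z ^ 2 + c) :=
    (continuous_pow 3).div (by fun_prop) fun z => (sqrt_pos.2 (quartic_pos ha hd z)).ne'
  have hL₀ := two_mul_sqrt_mul_sqrt_quartic_add_pos ha hd 0
  have hL₁ := two_mul_sqrt_mul_sqrt_quartic_add_pos ha hd 1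
  norm_num at hL₀ hL₁
  rw [intervalIntegral.integral_eq_sub_of_hasDerivAt
    (fun z _ => hasDerivAt_sqrt_quartic_sub_log ha hd z) (hcont.intervalIntegrable _ _),
    log_div hL₁.ne' hL₀.ne']
  norm_num
  ring

end Quartic

theorem abs_two_mul_mul_lt {y δ : ℝ} (hy : 0 < y) (hδ : δ ≠ 0) (z : ℝ) :
    |2 * z * δ| < y * z ^ 2 + z ^ 2 + δ ^ 2 := by
  have hamgm : |2 * z * δ| ≤ z ^ 2 + δ ^ 2 := by
    rw [abs_le]; constructor <;> nlinarith [sq_nonneg (z + δ), sq_nonneg (z - δ)]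
  rcases eq_or_ne z 0 with rfl | hz
  · simpa using pow_two_pos_of_ne_zero hδ
  · nlinarith [mul_pos hy (pow_pos (abs_pos.2 hz) 2), sq_abs z]

theorem integral_mul_pow_three_div_add_sub_mul_cos {y δ : ℝ} (hy : 0 < y) (hδ : δ ≠ 0) (z : ℝ) :
    ∫ θ in (0:ℝ)..2 * π, y * z ^ 3 / (y * z ^ 2 + (z ^ 2 + δ ^ 2 - 2 * z * δ * cos θ)) =
      2 * π * y * (z ^ 3 / √((y + 1) ^ 2 * z ^ 4 + 2 * δ ^ 2 * (y - 1) * z ^ 2 + δ ^ 4)) := by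
  have hform : ∀ θ, y * z ^ 3 / (y * z ^ 2 + (z ^ 2 + δ ^ 2 - 2 * z * δ * cos θ)) =
      y * z ^ 3 * (y * z ^ 2 + z ^ 2 + δ ^ 2 - 2 * z * δ * cos θ)⁻¹ := fun θ => by
    rw [div_eq_mul_inv]; ring_nf
  simp only [hform, intervalIntegral.integral_const_mul,
    integral_inv_sub_mul_cos (abs_two_mul_mul_lt hy hδ z)]
  rw [show (y * z ^ 2 + z ^ 2 + δ ^ 2) ^ 2 - (2 * z * δ) ^ 2
      = (y + 1) ^ 2 * z ^ 4 + 2 * δ ^ 2 * (y - 1) * z ^ 2 + δ ^ 4 by ring]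
  ring

theorem integral_integral_mul_pow_three_div_add_sub_mul_cos {y δ : ℝ} (hy : 0 < y)
    (hδ : δ ≠ 0) :
    ∫ θ in (0:ℝ)..2 * π, ∫ z in (0:ℝ)..1,
        y * z ^ 3 / (y * z ^ 2 + (z ^ 2 + δ ^ 2 - 2 * z * δ * cos θ)) =
      2 * π * y * ∫ z in (0:ℝ)..1,
        z ^ 3 / √((y + 1) ^ 2 * z ^ 4 + 2 * δ ^ 2 * (y - 1) * z ^ 2 + δ ^ 4) := by
  have hden : ∀ θ z : ℝ, y * z ^ 2 + (z ^ 2 + δ ^ 2 - 2 * z * δ * cos θ) ≠ 0 := fun θ z => by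
    have := sub_mul_cos_pos (abs_two_mul_mul_lt hy hδ z) θ
    linarith
  have hcont : Continuous fun p : ℝ × ℝ =>
      y * p.2 ^ 3 / (y * p.2 ^ 2 + (p.2 ^ 2 + δ ^ 2 - 2 * p.2 * δ * cos p.1)) :=
    (by fun_prop : Continuous _).div (by fun_prop) fun p => hden p.1 p.2
  rw [intervalIntegral_integral_swap_of_continuous
    (f := fun θ z => y * z ^ 3 / (y * z ^ 2 + (z ^ 2 + δ ^ 2 - 2 * z * δ * cos θ))) hcont
    two_pi_pos.le zero_le_one]
  simp only [integral_mul_pow_three_div_add_sub_mul_cos hy hδ,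
    intervalIntegral.integral_const_mul]

theorem Psi_closed_form_alpha_two_general
    (Ψ : ℝ → ℝ → ℝ → ℝ)
    (hΨ : ∀ y α δ : ℝ, Ψ y α δ =
      ∫ θ in (0:ℝ)..(2 * Real.pi), ∫ z in (0:ℝ)..1,
        y * z ^ (α + 1) /
          (y * z ^ α + (z ^ 2 + δ ^ 2 - 2 * z * δ * Real.cos θ) ^ (α / 2)))
    (ψ : ℝ → ℝ → ℝ)
    (hψ : ∀ y δ : ℝ, ψ y δ = Real.sqrt (δ ^ 4 + 2 * δ ^ 2 * (y - 1) + (y + 1) ^ 2))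
    (y δ : ℝ) (hy : 0 < y) (hδ : 0 < δ) :
    Ψ y 2 δ = Real.pi * y / (y + 1) ^ 3 *
      ((y + 1) * (ψ y δ - δ ^ 2) +
        δ ^ 2 * (y - 1) *
          Real.log (2 * δ ^ 2 * y /
            (δ ^ 2 * (y - 1) + (y + 1) * (ψ y δ + y + 1)))) := by
  have hrpow : ∀ x : ℝ, x ^ ((2:ℝ) + 1) = x ^ 3 ∧ x ^ (2:ℝ) = x ^ 2 ∧ x ^ ((2:ℝ) / 2) = x := by
    refine fun x => ⟨?_, rpow_two x, by rw [div_self two_ne_zero, rpow_one]⟩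
    rw [show (2:ℝ) + 1 = (3:ℕ) by norm_num, rpow_natCast]
  simp only [hΨ, hrpow, integral_integral_mul_pow_three_div_add_sub_mul_cos hy hδ.ne']
  rw [integral_pow_three_div_sqrt_quartic (by positivity)
    (by nlinarith [mul_pos (pow_pos hδ 4) hy])]
  have hsqrt_a : √((y + 1) ^ 2) = y + 1 := sqrt_sq (by positivity)
  have hsqrt_c : √(δ ^ 4) = δ ^ 2 := by
    rw [show δ ^ 4 = (δ ^ 2) ^ 2 by ring, sqrt_sq (by positivity)]
  have hsqrt_abc : √((y + 1) ^ 2 + 2 * δ ^ 2 * (y - 1) + δ ^ 4) = ψ y δ := by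
    rw [hψ]; ring_nf
  have hlog_arg : (2 * (y + 1) * ψ y δ + 2 * (y + 1) ^ 2 + 2 * δ ^ 2 * (y - 1)) /
      (2 * (y + 1) * δ ^ 2 + 2 * δ ^ 2 * (y - 1)) =
      (2 * δ ^ 2 * y / (δ ^ 2 * (y - 1) + (y + 1) * (ψ y δ + y + 1)))⁻¹ := by
    rw [inv_div, ← mul_div_mul_left _ _ (two_ne_zero' ℝ)]
    ring_nf
  rw [hsqrt_a, hsqrt_c, hsqrt_abc, hlog_arg, log_inv]
  field_simp
  ring

/-- Closed form for `Ψ(y; 2, δ)`, where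
`Ψ(y; α, δ) = ∫₀^{2π} ∫₀^1 y z^{α+1} / (y z^α + (z² + δ² - 2zδ cos θ)^{α/2}) dz dθ`. -/
theorem Psi_closed_form_alpha_two
    (Ψ : ℝ → ℝ → ℝ → ℝ)
    (hΨ : ∀ y α δ : ℝ, Ψ y α δ =
      ∫ θ in (0:ℝ)..(2 * Real.pi), ∫ z in (0:ℝ)..1,
        y * z ^ (α + 1) /
          (y * z ^ α + (z ^ 2 + δ ^ 2 - 2 * z * δ * Real.cos θ) ^ (α / 2)))
    (ψ : ℝ → ℝ → ℝ)
    (hψ : ∀ y δ : ℝ, ψ y δ = Real.sqrt (δ ^ 4 + 2 * δ ^ 2 * (y - 1) + (y + 1) ^ 2))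
    (y δ : ℝ) (hy : 0 < y) (hδ : 0 < δ) (hδ1 : δ ≠ 1) :
    Ψ y 2 δ = Real.pi * y / (y + 1) ^ 3 *
      ((y + 1) * (ψ y δ - δ ^ 2) +
        δ ^ 2 * (y - 1) *
          Real.log (2 * δ ^ 2 * y /
            (δ ^ 2 * (y - 1) + (y + 1) * (ψ y δ + y + 1)))) :=
  Psi_closed_form_alpha_two_general Ψ hΨ ψ hψ y δ hy hδ
end
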